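/- arXiv:1907.05052 — 2 statements merged into one kernel-verified Lean document; each statement's English description precedes it below -/
import Mathlib

section
/- Let (γ_k)_{k≥1} be a strictly increasing sequence of positive reals tending to +∞ with (γ_{k+1} - γ_k)²/(γ_{k+1} + γ_k) → 0 as k → ∞, and define λ₁ᴺ(α) = inf_k (γ_k² - αγ_k). Then λ₁ᴺ(α) + α²/4 = o(α) as α → +∞; i.e., (λ₁ᴺ(α) + α²/4)/α → 0 as α → +∞. -/
open Filter

/-- Key elementary inequality: if `0 < s ≤ α/2 ≤ t` then the squared distance from `α/2`
to the nearer of `s, t`, divided by `α`, is at most `(t-s)²/(t+s)`. -/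
lemma stmt9_key {s t α : ℝ} (hs : 0 < s) (hst : s < t) (h1 : s ≤ α / 2) (h2 : α / 2 ≤ t) :
    min ((s - α / 2) ^ 2) ((t - α / 2) ^ 2) / α ≤ (t - s) ^ 2 / (t + s) := by
  have hα : 0 < α := by linarith
  have hts : 0 < t + s := by linarith
  rw [div_le_div_iff₀ hα hts]
  rcases le_total ((s - α / 2) ^ 2) ((t - α / 2) ^ 2) with h | h
  · rw [min_eq_left h]
    -- from h : (s-α/2)² ≤ (t-α/2)², deduce α ≤ s + t
    have hle : α ≤ s + t := by nlinarith [sq_nonneg (s - α/2), sq_nonneg (t - α/2)]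
    nlinarith [sq_nonneg (s - α/2), mul_nonneg (sub_nonneg.mpr h1) hs.le]
  · rw [min_eq_right h]
    have hge : s + t ≤ α := by nlinarith [sq_nonneg (s - α/2), sq_nonneg (t - α/2)]
    have hbsq : (t - α / 2) ^ 2 ≤ ((t - s) / 2) ^ 2 := by nlinarith
    nlinarith [mul_le_mul_of_nonneg_right hbsq hts.le,
      mul_le_mul_of_nonneg_left hge (sq_nonneg (t - s))]

/-- For `(γ_k)` strictly increasing positive reals tending to `+∞` with
`(γ_{k+1} - γ_k)²/(γ_{k+1} + γ_k) → 0`, and `λ₁ᴺ(α) = inf_k (γ_k² - αγ_k)`, we have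
`λ₁ᴺ(α) + α²/4 = o(α)` as `α → +∞`, i.e. `(λ₁ᴺ(α) + α²/4)/α → 0`. -/
theorem stmt9 (γ : ℕ → ℝ) (hpos : ∀ k, 0 < γ k) (hmono : StrictMono γ)
    (htop : Tendsto γ atTop atTop)
    (hgap : Tendsto (fun k : ℕ => (γ (k + 1) - γ k) ^ 2 / (γ (k + 1) + γ k)) atTop (nhds 0)) :
    Tendsto (fun α : ℝ => ((⨅ k : ℕ, (γ k ^ 2 - α * γ k)) + α ^ 2 / 4) / α) atTop (nhds 0) := by
  classical
  rw [Metric.tendsto_nhds]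
  intro ε hε
  obtain ⟨N, hN⟩ := (Metric.tendsto_atTop.mp hgap) ε hε
  rw [eventually_atTop]
  refine ⟨max 1 (2 * γ N), fun α hα => ?_⟩
  have hα1 : (1 : ℝ) ≤ α := le_trans (le_max_left _ _) hα
  have hα0 : 0 < α := by linarith
  have hαN : γ N ≤ α / 2 := by
    have := le_trans (le_max_right _ _) hα
    linarith
  -- rewrite the infimum
  have hb1 : BddBelow (Set.range fun k => γ k ^ 2 - α * γ k) := by
    refine ⟨-(α ^ 2 / 4), ?_⟩
    rintro x ⟨k, rfl⟩
    nlinarith [sq_nonneg (γ k - α / 2)]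
  have hb2 : BddBelow (Set.range fun k => (γ k - α / 2) ^ 2) := by
    refine ⟨0, ?_⟩
    rintro x ⟨k, rfl⟩
    exact sq_nonneg _
  have hrw : (⨅ k : ℕ, (γ k ^ 2 - α * γ k)) + α ^ 2 / 4
      = ⨅ k : ℕ, (γ k - α / 2) ^ 2 := by
    apply le_antisymm
    · refine le_ciInf fun k => ?_
      have h1 : (⨅ k : ℕ, (γ k ^ 2 - α * γ k)) ≤ γ k ^ 2 - α * γ k := ciInf_le hb1 k
      nlinarith
    · have h2 : (⨅ k : ℕ, (γ k - α / 2) ^ 2) - α ^ 2 / 4 ≤ ⨅ k : ℕ, (γ k ^ 2 - α * γ k) := by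
        refine le_ciInf fun k => ?_
        have h3 : (⨅ k : ℕ, (γ k - α / 2) ^ 2) ≤ (γ k - α / 2) ^ 2 := ciInf_le hb2 k
        nlinarith
      linarith
  rw [hrw]
  set F := ⨅ k : ℕ, (γ k - α / 2) ^ 2 with hF
  have hF0 : 0 ≤ F := le_ciInf fun k => sq_nonneg _
  -- find k with γ k ≤ α/2 < γ (k+1)
  have hex : ∃ m, α / 2 < γ m := by
    obtain ⟨m, hm⟩ := (tendsto_atTop.mp htop (α / 2 + 1)).exists
    exact ⟨m, by linarith⟩
  obtain ⟨k, hk1, hk2, hkN⟩ : ∃ k, γ k ≤ α / 2 ∧ α / 2 < γ (k + 1) ∧ N ≤ k := by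
    have hm1 : α / 2 < γ (Nat.find hex) := Nat.find_spec hex
    have hmN : N < Nat.find hex := by
      by_contra h
      push_neg at h
      exact absurd hm1 (not_lt.mpr (le_trans (hmono.monotone h) hαN))
    refine ⟨Nat.find hex - 1, ?_, ?_, by omega⟩
    · have := Nat.find_min hex (m := Nat.find hex - 1) (by omega)
      push_neg at this
      exact this
    · have h9 : Nat.find hex - 1 + 1 = Nat.find hex := by omega
      rw [h9]
      exact hm1
  have hFle : F ≤ min ((γ k - α / 2) ^ 2) ((γ (k + 1) - α / 2) ^ 2) :=
    le_min (ciInf_le hb2 k) (ciInf_le hb2 (k + 1))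
  have hkey := stmt9_key (hpos k) (hmono (Nat.lt_succ_self k)) hk1 hk2.le
  have hFα : F / α ≤ (γ (k + 1) - γ k) ^ 2 / (γ (k + 1) + γ k) := by
    refine le_trans ?_ hkey
    gcongr
  have hlt := hN k hkN
  rw [Real.dist_eq, sub_zero] at hlt ⊢
  have hbd0 : 0 ≤ (γ (k + 1) - γ k) ^ 2 / (γ (k + 1) + γ k) :=
    div_nonneg (sq_nonneg _) (by linarith [hpos k, hpos (k+1)])
  rw [abs_of_nonneg hbd0] at hlt
  rw [abs_of_nonneg (div_nonneg hF0 hα0.le)]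
  exact lt_of_le_of_lt hFα hlt
end

section
/- Let ν ≥ 0 and t ≥ 1 be fixed, and suppose j_m = (m + ν/2 - 1/4)π - (4ν² - 1)/(8(m + ν/2 - 1/4)π) + o(1/m²) as m → ∞. Then (j_m² - j_{m+t}²)²/4 - (j_m² + j_{m+t}²)·t²π²/2 → t²π²(4ν² - 1 - t²π²)/4 as m → ∞. -/
open Filter Asymptotics Real

/-- If `(j_m)` is a sequence of positive reals with
`j_m = (m + ν/2 - 1/4)π - (4ν² - 1)/(8(m + ν/2 - 1/4)π) + o(1/m²)`, with `ν ≥ 0` and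
`t ≥ 1` a fixed integer, then
`(j_m² - j_{m+t}²)²/4 - (j_m² + j_{m+t}²)·t²π²/2 → t²π²(4ν² - 1 - t²π²)/4`. -/
theorem stmt14 (j : ℕ → ℝ) (ν : ℝ) (hν : 0 ≤ ν) (t : ℕ) (ht : 1 ≤ t)
    (hpos : ∀ m, 0 < j m)
    (hasymp : (fun m : ℕ => j m - (((m : ℝ) + ν / 2 - 1 / 4) * π
        - (4 * ν ^ 2 - 1) / (8 * ((m : ℝ) + ν / 2 - 1 / 4) * π)))
      =o[atTop] fun m : ℕ => 1 / (m : ℝ) ^ 2) :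
    Tendsto (fun m : ℕ => (j m ^ 2 - j (m + t) ^ 2) ^ 2 / 4
        - (j m ^ 2 + j (m + t) ^ 2) * ((t : ℝ) ^ 2 * π ^ 2) / 2)
      atTop (nhds ((t : ℝ) ^ 2 * π ^ 2 * (4 * ν ^ 2 - 1 - (t : ℝ) ^ 2 * π ^ 2) / 4)) := by
  have hπ : 0 < π := Real.pi_pos
  set k : ℝ := ν / 2 - 1 / 4 with hkdef
  set c : ℝ := 4 * ν ^ 2 - 1 with hcdef
  set A : ℕ → ℝ := fun m => ((m : ℝ) + k) * π with hAdef
  set ε : ℕ → ℝ := fun m => j m - (A m - c / (8 * A m)) with hεdef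
  set u : ℕ → ℝ := fun m => j m ^ 2 - (A m ^ 2 - c / 4) with hudef
  have hεo : ε =o[atTop] fun m : ℕ => 1 / (m : ℝ) ^ 2 := by
    have he : ε = fun m : ℕ => j m - (((m : ℝ) + ν / 2 - 1 / 4) * π
        - c / (8 * ((m : ℝ) + ν / 2 - 1 / 4) * π)) := by
      funext m
      simp only [hεdef, hAdef, hkdef]
      ring
    rw [he]; exact hasymp
  have hA_eq : ∀ m, A (m + t) = A m + (t : ℝ) * π := by
    intro m; simp only [hAdef]; push_cast; ring
  have hAtop : Tendsto A atTop atTop := by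
    have h1 : Tendsto (fun m : ℕ => (m : ℝ) + k) atTop atTop :=
      tendsto_atTop_add_const_right atTop k tendsto_natCast_atTop_atTop
    exact h1.atTop_mul_const hπ
  have hApos : ∀ᶠ m in atTop, 0 < A m := hAtop.eventually_gt_atTop 0
  have hAinv : Tendsto (fun m => (A m)⁻¹) atTop (nhds 0) :=
    tendsto_inv_atTop_zero.comp hAtop
  -- A = O(m)
  have hAO : A =O[atTop] fun m : ℕ => (m : ℝ) := by
    rw [isBigO_iff]
    refine ⟨(1 + |k|) * π, ?_⟩
    filter_upwards [eventually_ge_atTop 1] with m hm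
    have h1 : (1 : ℝ) ≤ (m : ℝ) := by exact_mod_cast hm
    have hm0 : (0 : ℝ) ≤ (m : ℝ) := by linarith
    have habs : ‖A m‖ ≤ ((m : ℝ) + |k|) * π := by
      simp only [hAdef, Real.norm_eq_abs, abs_mul, abs_of_pos hπ]
      have : |(m : ℝ) + k| ≤ (m : ℝ) + |k| := by
        calc |(m : ℝ) + k| ≤ |(m : ℝ)| + |k| := abs_add_le _ _
          _ = (m : ℝ) + |k| := by rw [abs_of_nonneg hm0]
      nlinarith
    have : ((m : ℝ) + |k|) * π ≤ (1 + |k|) * π * ‖(m : ℝ)‖ := by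
      rw [Real.norm_eq_abs, abs_of_nonneg hm0]
      nlinarith [mul_nonneg (mul_nonneg (abs_nonneg k) (sub_nonneg.mpr h1)) hπ.le]
    linarith
  -- limits of the error terms
  have hε0 : Tendsto ε atTop (nhds 0) := by
    refine hεo.trans_tendsto ?_
    have : Tendsto (fun m : ℕ => (m : ℝ) ^ 2) atTop atTop :=
      (tendsto_pow_atTop two_ne_zero).comp tendsto_natCast_atTop_atTop
    simpa only [one_div, Function.comp_def] using tendsto_inv_atTop_zero.comp this
  have hA2ε : Tendsto (fun m => A m ^ 2 * ε m) atTop (nhds 0) := by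
    have h1 : (fun m => A m ^ 2 * ε m) =o[atTop]
        fun m : ℕ => (m : ℝ) ^ 2 * (1 / (m : ℝ) ^ 2) := (hAO.pow 2).mul_isLittleO hεo
    have h2 : (fun m : ℕ => (m : ℝ) ^ 2 * (1 / (m : ℝ) ^ 2)) =O[atTop]
        fun _ : ℕ => (1 : ℝ) := by
      refine EventuallyEq.isBigO ?_
      filter_upwards [eventually_ge_atTop 1] with m hm
      have : (m : ℝ) ≠ 0 := by positivity
      field_simp
    exact isLittleO_one_iff ℝ |>.mp (h1.trans_isBigO h2)
  have hAε : Tendsto (fun m => A m * ε m) atTop (nhds 0) := by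
    have h1 : (fun m => A m * ε m) =o[atTop]
        fun m : ℕ => (m : ℝ) * (1 / (m : ℝ) ^ 2) := hAO.mul_isLittleO hεo
    refine h1.trans_tendsto ?_
    have h2 : Tendsto (fun m : ℕ => 1 / (m : ℝ)) atTop (nhds 0) :=
      tendsto_one_div_atTop_nhds_zero_nat
    refine h2.congr' ?_
    filter_upwards [eventually_ge_atTop 1] with m hm
    have : (m : ℝ) ≠ 0 := by positivity
    field_simp
  -- the key limit: A m * u m → 0
  have huA : Tendsto (fun m => A m * u m) atTop (nhds 0) := by
    have hlim : Tendsto (fun m => c ^ 2 / 64 * (A m)⁻¹ + 2 * (A m ^ 2 * ε m)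
        - c / 4 * ε m + A m * ε m * ε m) atTop (nhds 0) := by
      have := (((hAinv.const_mul (c ^ 2 / 64)).add (hA2ε.const_mul 2)).sub
        (hε0.const_mul (c / 4))).add (hAε.mul hε0)
      simpa using this
    refine hlim.congr' ?_
    filter_upwards [hApos] with m hm
    have hA0 : A m ≠ 0 := ne_of_gt hm
    have hj : j m = A m - c / (8 * A m) + ε m := by
      simp only [hεdef]; ring
    simp only [hudef, hj]
    field_simp
    ring
  have hu0 : Tendsto u atTop (nhds 0) := by
    have := huA.mul hAinv
    rw [zero_mul] at this
    refine this.congr' ?_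
    filter_upwards [hApos] with m hm
    field_simp
  have hv0 : Tendsto (fun m => u (m + t)) atTop (nhds 0) :=
    hu0.comp (tendsto_add_atTop_nat t)
  have hvA' : Tendsto (fun m => A (m + t) * u (m + t)) atTop (nhds 0) :=
    huA.comp (tendsto_add_atTop_nat t)
  have hAv : Tendsto (fun m => A m * u (m + t)) atTop (nhds 0) := by
    have h1 : Tendsto (fun m => A (m + t) * u (m + t) - (t : ℝ) * π * u (m + t))
        atTop (nhds 0) := by
      simpa using hvA'.sub (hv0.const_mul ((t : ℝ) * π))
    refine h1.congr fun m => ?_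
    rw [hA_eq m]; ring
  -- algebraic identity
  have key : ∀ m, (j m ^ 2 - j (m + t) ^ 2) ^ 2 / 4
      - (j m ^ 2 + j (m + t) ^ 2) * ((t : ℝ) ^ 2 * π ^ 2) / 2
      = (t : ℝ) ^ 2 * π ^ 2 * (c - (t : ℝ) ^ 2 * π ^ 2) / 4
        + (-((t : ℝ) * π) * (A m * u m) + (t : ℝ) * π * (A m * u (m + t))
          - (t : ℝ) ^ 2 * π ^ 2 * (u m - u (m + t)) / 2
          + (u m - u (m + t)) ^ 2 / 4
          - (t : ℝ) ^ 2 * π ^ 2 * (u m + u (m + t)) / 2) := by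
    intro m
    have h1 : j m ^ 2 = A m ^ 2 - c / 4 + u m := by simp only [hudef]; ring
    have h2 : j (m + t) ^ 2 = (A m + (t : ℝ) * π) ^ 2 - c / 4 + u (m + t) := by
      have := hA_eq m
      simp only [hudef]
      rw [this]; ring
    rw [h1, h2]; ring
  -- remainder tends to 0
  have hR : Tendsto (fun m => -((t : ℝ) * π) * (A m * u m)
      + (t : ℝ) * π * (A m * u (m + t))
      - (t : ℝ) ^ 2 * π ^ 2 * (u m - u (m + t)) / 2
      + (u m - u (m + t)) ^ 2 / 4
      - (t : ℝ) ^ 2 * π ^ 2 * (u m + u (m + t)) / 2) atTop (nhds 0) := by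
    have hsub : Tendsto (fun m => u m - u (m + t)) atTop (nhds 0) := by
      have := hu0.sub hv0; simpa using this
    have hadd : Tendsto (fun m => u m + u (m + t)) atTop (nhds 0) := by
      have := hu0.add hv0; simpa using this
    have := ((((huA.const_mul (-((t : ℝ) * π))).add
        (hAv.const_mul ((t : ℝ) * π))).sub
        ((hsub.const_mul ((t : ℝ) ^ 2 * π ^ 2)).div_const 2)).add
        (((hsub.pow 2).div_const 4))).sub
        ((hadd.const_mul ((t : ℝ) ^ 2 * π ^ 2)).div_const 2)
    simpa using this
  have := (tendsto_const_nhds (x := (t : ℝ) ^ 2 * π ^ 2 * (c - (t : ℝ) ^ 2 * π ^ 2) / 4)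
    (f := atTop (α := ℕ))).add hR
  rw [add_zero] at this
  exact this.congr fun m => (key m).symm
end
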